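/- Prevision bound for the triple conjunction: for events E1, H1, E2, H2, E3, H3 with P(Hi) > 0 for i = 1, 2, 3, the prevision x123 of the triple conjunction C3 satisfies x123 ≤ min(x1, x2, x3), where xi := P(Ei|Hi). -/

import Mathlib

open MeasureTheory Set
open scoped Classical

noncomputable section

variable {Ω : Type*} [MeasurableSpace Ω]

/-- Indicator (with values in `ℝ`) of a set. -/
def ind (A : Set Ω) : Ω → ℝ := A.indicator 1

/-- Conditional probability `P(A|H) = P(A ∩ H)/P(H)`. -/
def condProb (P : Measure Ω) (A H : Set Ω) : ℝ :=
  (P (A ∩ H)).toReal / (P H).toReal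

/-- The (indicator of the) conditional event `A|H`,
`⟦A|H⟧ = 1_{A∩H} + P(A|H)·1_{Hᶜ}`. -/
def condEvent (P : Measure Ω) (A H : Set Ω) : Ω → ℝ :=
  fun ω => ind (A ∩ H) ω + condProb P A H * ind Hᶜ ω

/-- The prevision `z` of the conjunction `(A|H) ∧ (B|K)`:
`z = E[min(⟦A|H⟧, ⟦B|K⟧)·1_{H∪K}]/P(H∪K)`. -/
def conjPrev (P : Measure Ω) (A H B K : Set Ω) : ℝ :=
  (∫ ω, min (condEvent P A H ω) (condEvent P B K ω) * ind (H ∪ K) ω ∂P) /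
    (P (H ∪ K)).toReal

/-- The conjunction `⟦(A|H) ∧ (B|K)⟧ = min(⟦A|H⟧, ⟦B|K⟧)·1_{H∪K} + z·1_{(H∪K)ᶜ}`. -/
def conjCE (P : Measure Ω) (A H B K : Set Ω) : Ω → ℝ :=
  fun ω => min (condEvent P A H ω) (condEvent P B K ω) * ind (H ∪ K) ω
    + conjPrev P A H B K * ind (H ∪ K)ᶜ ω

/-- The iterated conditional `⟦(B|K)|(A|H)⟧ = ⟦(A|H)∧(B|K)⟧ + μ·(1 − ⟦A|H⟧)`,
with `μ = z / P(A|H)`. -/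
def iterCond (P : Measure Ω) (A H B K : Set Ω) : Ω → ℝ :=
  fun ω => conjCE P A H B K ω +
    (conjPrev P A H B K / condProb P A H) * (1 - condEvent P A H ω)

/-- Goodman–Nguyen logical implication between conditional events:
`A|H ⊑ B|K` iff `A∩H ⊆ B∩K` and `Bᶜ∩K ⊆ Aᶜ∩H`. -/
def GNle (A H B K : Set Ω) : Prop := A ∩ H ⊆ B ∩ K ∧ Bᶜ ∩ K ⊆ Aᶜ ∩ H

/-- Triple conjunction `⟦(E1|H1)∧(E2|H2)∧(E3|H3)⟧`, defined piecewise, except that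
on `H1ᶜ∩H2ᶜ∩H3ᶜ` it is set to `0` (it is irrelevant there for computing `x123`). -/
def c3base (P : Measure Ω) (E1 H1 E2 H2 E3 H3 : Set Ω) : Ω → ℝ := fun ω =>
  if ω ∈ E1 ∩ H1 ∩ (E2 ∩ H2) ∩ (E3 ∩ H3) then 1
  else if ω ∈ (E1ᶜ ∩ H1) ∪ (E2ᶜ ∩ H2) ∪ (E3ᶜ ∩ H3) then 0
  else if ω ∈ H1ᶜ ∩ (E2 ∩ H2) ∩ (E3 ∩ H3) then condProb P E1 H1
  else if ω ∈ H2ᶜ ∩ (E1 ∩ H1) ∩ (E3 ∩ H3) then condProb P E2 H2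
  else if ω ∈ H3ᶜ ∩ (E1 ∩ H1) ∩ (E2 ∩ H2) then condProb P E3 H3
  else if ω ∈ H1ᶜ ∩ H2ᶜ ∩ (E3 ∩ H3) then conjPrev P E1 H1 E2 H2
  else if ω ∈ H1ᶜ ∩ H3ᶜ ∩ (E2 ∩ H2) then conjPrev P E1 H1 E3 H3
  else if ω ∈ H2ᶜ ∩ H3ᶜ ∩ (E1 ∩ H1) then conjPrev P E2 H2 E3 H3
  else 0

/-- The prevision `x123 = E[C3·1_{H1∪H2∪H3}]/P(H1∪H2∪H3)` of the triple conjunction. -/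
def x123 (P : Measure Ω) (E1 H1 E2 H2 E3 H3 : Set Ω) : ℝ :=
  (∫ ω, c3base P E1 H1 E2 H2 E3 H3 ω * ind (H1 ∪ H2 ∪ H3) ω ∂P) /
    (P (H1 ∪ H2 ∪ H3)).toReal

/-- The triple conjunction `C3 = ⟦(E1|H1)∧(E2|H2)∧(E3|H3)⟧`, equal to `x123` on
`H1ᶜ∩H2ᶜ∩H3ᶜ` and given piecewise by `c3base` elsewhere. -/
def c3 (P : Measure Ω) (E1 H1 E2 H2 E3 H3 : Set Ω) : Ω → ℝ := fun ω =>
  if ω ∈ H1ᶜ ∩ H2ᶜ ∩ H3ᶜ then x123 P E1 H1 E2 H2 E3 H3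
  else c3base P E1 H1 E2 H2 E3 H3 ω

/-- The iterated conditional `⟦(E3|H3)|((E1|H1)∧(E2|H2))⟧ = C3 + μ·(1 − C12)`,
where `μ = x123/x12` and `C12 = ⟦(E1|H1)∧(E2|H2)⟧`. -/
def iter3 (P : Measure Ω) (E1 H1 E2 H2 E3 H3 : Set Ω) : Ω → ℝ := fun ω =>
  c3 P E1 H1 E2 H2 E3 H3 ω +
    (x123 P E1 H1 E2 H2 E3 H3 / conjPrev P E1 H1 E2 H2) *
      (1 - conjCE P E1 H1 E2 H2 ω)

/-!
Each `⟦Ei|Hi⟧` equals `xi` off `Hi`, so for `U ⊇ Hi` its expectation against `1_U` is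
`xi · P(U)`. The triple conjunction is pointwise at most every `⟦Ei|Hi⟧`, since the pairwise
previsions satisfy `xij ≤ min(xi, xj)` by the same argument one level down; integrating against
`1_{H1∪H2∪H3}` gives `x123 ≤ xi`.
-/

section Indicator

variable {α : Type*} (S : Set α) {ω : α}

lemma ind_of_mem (h : ω ∈ S) : ind S ω = 1 := Set.indicator_of_mem h 1

lemma ind_of_notMem (h : ω ∉ S) : ind S ω = 0 := Set.indicator_of_notMem h 1

lemma ind_nonneg (ω : α) : 0 ≤ ind S ω := by
  by_cases h : ω ∈ S <;> simp [ind, h]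

lemma ind_le_one (ω : α) : ind S ω ≤ 1 := by
  by_cases h : ω ∈ S <;> simp [ind, h]

end Indicator

section Integral

variable {S : Set Ω}

lemma measurable_ind (hS : MeasurableSet S) : Measurable (ind S) :=
  measurable_one.indicator hS

lemma integral_ind (P : Measure Ω) (hS : MeasurableSet S) : ∫ ω, ind S ω ∂P = (P S).toReal :=
  integral_indicator_one hS

lemma integrable_mul_ind (P : Measure Ω) [IsFiniteMeasure P] {f : Ω → ℝ} (hf : Measurable f)
    (hf0 : ∀ ω, 0 ≤ f ω) (hf1 : ∀ ω, f ω ≤ 1) (hS : MeasurableSet S) :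
    Integrable (fun ω => f ω * ind S ω) P := by
  refine .of_bound (hf.mul (measurable_ind hS)).aestronglyMeasurable 1 (ae_of_all _ fun ω => ?_)
  rw [Real.norm_of_nonneg (mul_nonneg (hf0 ω) (ind_nonneg S ω))]
  exact mul_le_one₀ (hf1 ω) (ind_nonneg S ω) (ind_le_one S ω)

end Integral

section CondEvent

variable (P : Measure Ω) {A H : Set Ω} {ω : Ω}

lemma condProb_nonneg (A H : Set Ω) : 0 ≤ condProb P A H := by
  unfold condProb; positivity

lemma condProb_le_one [IsFiniteMeasure P] (A H : Set Ω) : condProb P A H ≤ 1 :=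
  div_le_one_of_le₀ (measureReal_mono inter_subset_right) measureReal_nonneg

-- If `P H = 0` then `condProb P A H = 0` (division by zero), and both sides vanish.
lemma measureReal_inter_eq_condProb_mul [IsFiniteMeasure P] (A H : Set Ω) :
    (P (A ∩ H)).toReal = condProb P A H * (P H).toReal := by
  rcases eq_or_ne (P H).toReal 0 with h | h
  · rw [h, mul_zero]
    exact le_antisymm (h ▸ measureReal_mono inter_subset_right) measureReal_nonneg
  · rw [condProb, div_mul_cancel₀ _ h]

lemma condEvent_of_mem_inter (h : ω ∈ A ∩ H) : condEvent P A H ω = 1 := by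
  simp [condEvent, ind_of_mem _ h, ind_of_notMem Hᶜ (not_not_intro h.2)]

lemma condEvent_of_notMem (h : ω ∉ H) : condEvent P A H ω = condProb P A H := by
  simp [condEvent, ind_of_notMem _ (fun h' : ω ∈ A ∩ H => h h'.2), ind_of_mem Hᶜ h]

lemma condEvent_nonneg (A H : Set Ω) (ω : Ω) : 0 ≤ condEvent P A H ω :=
  add_nonneg (ind_nonneg _ ω) (mul_nonneg (condProb_nonneg P A H) (ind_nonneg _ ω))

lemma condEvent_le_one [IsFiniteMeasure P] (A H : Set Ω) (ω : Ω) : condEvent P A H ω ≤ 1 := by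
  by_cases h : ω ∈ H
  · rw [condEvent, ind_of_notMem Hᶜ (not_not_intro h), mul_zero, add_zero]
    exact ind_le_one _ ω
  · rw [condEvent_of_notMem P h]
    exact condProb_le_one P A H

lemma measurable_condEvent (hA : MeasurableSet A) (hH : MeasurableSet H) :
    Measurable (condEvent P A H) :=
  (measurable_ind (hA.inter hH)).add ((measurable_ind hH.compl).const_mul _)

lemma condEvent_mul_ind_of_subset {U : Set Ω} (hHU : H ⊆ U) (ω : Ω) :
    condEvent P A H ω * ind U ω = ind (A ∩ H) ω + condProb P A H * ind (U \ H) ω := by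
  by_cases hH : ω ∈ H
  · have hU : ω ∈ U := hHU hH
    simp [condEvent, ind, hH, hU]
  · by_cases hU : ω ∈ U <;> simp [condEvent, ind, hH, hU]

lemma integral_condEvent_mul_ind [IsFiniteMeasure P] {U : Set Ω} (hA : MeasurableSet A)
    (hH : MeasurableSet H) (hU : MeasurableSet U) (hHU : H ⊆ U) :
    ∫ ω, condEvent P A H ω * ind U ω ∂P = condProb P A H * (P U).toReal := by
  simp_rw [condEvent_mul_ind_of_subset P hHU]
  rw [integral_add ((integrable_const 1).indicator (hA.inter hH))
      (((integrable_const 1).indicator (hU.diff hH)).const_mul _), integral_const_mul,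
    integral_ind P (hA.inter hH), integral_ind P (hU.diff hH),
    measureReal_inter_eq_condProb_mul,
    show (P (U \ H)).toReal = (P U).toReal - (P H).toReal from measureReal_sdiff hHU hH]
  ring

lemma integral_mul_ind_div_le_condProb [IsFiniteMeasure P] {U : Set Ω} {f : Ω → ℝ}
    (hA : MeasurableSet A) (hH : MeasurableSet H) (hU : MeasurableSet U) (hHU : H ⊆ U)
    (hf : Measurable f) (hf0 : ∀ ω, 0 ≤ f ω) (hfle : ∀ ω, f ω ≤ condEvent P A H ω) :
    (∫ ω, f ω * ind U ω ∂P) / (P U).toReal ≤ condProb P A H := by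
  refine div_le_of_le_mul₀ measureReal_nonneg (condProb_nonneg P A H) ?_
  rw [← integral_condEvent_mul_ind P hA hH hU hHU]
  have hle1 (ω : Ω) : f ω ≤ 1 := (hfle ω).trans (condEvent_le_one P A H ω)
  refine integral_mono (integrable_mul_ind P hf hf0 hle1 hU)
    (integrable_mul_ind P (measurable_condEvent P hA hH) (condEvent_nonneg P A H)
      (condEvent_le_one P A H) hU)
    fun ω => mul_le_mul_of_nonneg_right (hfle ω) (ind_nonneg U ω)

end CondEvent

section Conjunction

variable (P : Measure Ω) {A H B K : Set Ω}

lemma conjPrev_nonneg (A H B K : Set Ω) : 0 ≤ conjPrev P A H B K :=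
  div_nonneg (integral_nonneg fun ω => mul_nonneg
    (le_min (condEvent_nonneg P A H ω) (condEvent_nonneg P B K ω)) (ind_nonneg _ ω))
    measureReal_nonneg

lemma measurable_min_condEvent (hA : MeasurableSet A) (hH : MeasurableSet H)
    (hB : MeasurableSet B) (hK : MeasurableSet K) :
    Measurable fun ω => min (condEvent P A H ω) (condEvent P B K ω) :=
  (measurable_condEvent P hA hH).min (measurable_condEvent P hB hK)

variable [IsFiniteMeasure P]

lemma conjPrev_le_condProb_left (hA : MeasurableSet A) (hH : MeasurableSet H)
    (hB : MeasurableSet B) (hK : MeasurableSet K) : conjPrev P A H B K ≤ condProb P A H :=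
  integral_mul_ind_div_le_condProb P hA hH (hH.union hK) subset_union_left
    (measurable_min_condEvent P hA hH hB hK)
    (fun ω => le_min (condEvent_nonneg P A H ω) (condEvent_nonneg P B K ω))
    fun _ => min_le_left _ _

lemma conjPrev_le_condProb_right (hA : MeasurableSet A) (hH : MeasurableSet H)
    (hB : MeasurableSet B) (hK : MeasurableSet K) : conjPrev P A H B K ≤ condProb P B K :=
  integral_mul_ind_div_le_condProb P hB hK (hH.union hK) subset_union_right
    (measurable_min_condEvent P hA hH hB hK)
    (fun ω => le_min (condEvent_nonneg P A H ω) (condEvent_nonneg P B K ω))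
    fun _ => min_le_right _ _

end Conjunction

section TripleConjunction

variable (P : Measure Ω) {E1 H1 E2 H2 E3 H3 : Set Ω}

lemma measurable_c3base (hE1 : MeasurableSet E1) (hH1 : MeasurableSet H1)
    (hE2 : MeasurableSet E2) (hH2 : MeasurableSet H2)
    (hE3 : MeasurableSet E3) (hH3 : MeasurableSet H3) :
    Measurable (c3base P E1 H1 E2 H2 E3 H3) := by
  unfold c3base
  repeat refine Measurable.ite (by measurability) measurable_const ?_
  exact measurable_const

lemma c3base_nonneg (E1 H1 E2 H2 E3 H3 : Set Ω) (ω : Ω) : 0 ≤ c3base P E1 H1 E2 H2 E3 H3 ω := by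
  unfold c3base
  split_ifs <;> first
    | exact zero_le_one
    | exact le_rfl
    | exact condProb_nonneg P _ _
    | exact conjPrev_nonneg P _ _ _ _

lemma c3base_le_min_condEvent [IsFiniteMeasure P]
    (hE1 : MeasurableSet E1) (hH1 : MeasurableSet H1)
    (hE2 : MeasurableSet E2) (hH2 : MeasurableSet H2)
    (hE3 : MeasurableSet E3) (hH3 : MeasurableSet H3) (ω : Ω) :
    c3base P E1 H1 E2 H2 E3 H3 ω ≤
      min (condEvent P E1 H1 ω) (min (condEvent P E2 H2 ω) (condEvent P E3 H3 ω)) := by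
  unfold c3base
  have hx12 := conjPrev_le_condProb_left P hE1 hH1 hE2 hH2
  have hx21 := conjPrev_le_condProb_right P hE1 hH1 hE2 hH2
  have hx13 := conjPrev_le_condProb_left P hE1 hH1 hE3 hH3
  have hx31 := conjPrev_le_condProb_right P hE1 hH1 hE3 hH3
  have hx23 := conjPrev_le_condProb_left P hE2 hH2 hE3 hH3
  have hx32 := conjPrev_le_condProb_right P hE2 hH2 hE3 hH3
  have hx1 := condProb_le_one P E1 H1
  have hx2 := condProb_le_one P E2 H2
  have hx3 := condProb_le_one P E3 H3
  have hmin_nonneg := le_min (condEvent_nonneg P E1 H1 ω)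
    (le_min (condEvent_nonneg P E2 H2 ω) (condEvent_nonneg P E3 H3 ω))
  split_ifs with h123 _ h23 h13 h12 h3 h2 h1
  · simp [condEvent_of_mem_inter P h123.1.1, condEvent_of_mem_inter P h123.1.2,
      condEvent_of_mem_inter P h123.2]
  · exact hmin_nonneg
  · rw [condEvent_of_notMem P h23.1.1, condEvent_of_mem_inter P h23.1.2,
      condEvent_of_mem_inter P h23.2]
    exact le_min le_rfl (le_min hx1 hx1)
  · rw [condEvent_of_mem_inter P h13.1.2, condEvent_of_notMem P h13.1.1,
      condEvent_of_mem_inter P h13.2]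
    exact le_min hx2 (le_min le_rfl hx2)
  · rw [condEvent_of_mem_inter P h12.1.2, condEvent_of_mem_inter P h12.2,
      condEvent_of_notMem P h12.1.1]
    exact le_min hx3 (le_min hx3 le_rfl)
  · rw [condEvent_of_notMem P h3.1.1, condEvent_of_notMem P h3.1.2,
      condEvent_of_mem_inter P h3.2]
    exact le_min hx12 (le_min hx21 (hx12.trans hx1))
  · rw [condEvent_of_notMem P h2.1.1, condEvent_of_mem_inter P h2.2,
      condEvent_of_notMem P h2.1.2]
    exact le_min hx13 (le_min (hx13.trans hx1) hx31)
  · rw [condEvent_of_mem_inter P h1.2, condEvent_of_notMem P h1.1.1,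
      condEvent_of_notMem P h1.1.2]
    exact le_min (hx23.trans hx2) (le_min hx23 hx32)
  · exact hmin_nonneg

end TripleConjunction

theorem triple_conj_prevision_le_general (P : Measure Ω) [IsProbabilityMeasure P]
    (E1 H1 E2 H2 E3 H3 : Set Ω)
    (hE1 : MeasurableSet E1) (hH1 : MeasurableSet H1)
    (hE2 : MeasurableSet E2) (hH2 : MeasurableSet H2)
    (hE3 : MeasurableSet E3) (hH3 : MeasurableSet H3) :
    x123 P E1 H1 E2 H2 E3 H3 ≤
      min (condProb P E1 H1) (min (condProb P E2 H2) (condProb P E3 H3)) := by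
  have hU := (hH1.union hH2).union hH3
  have hc3 := measurable_c3base P hE1 hH1 hE2 hH2 hE3 hH3
  have hle := c3base_le_min_condEvent P hE1 hH1 hE2 hH2 hE3 hH3
  refine le_min ?_ (le_min ?_ ?_)
  · exact integral_mul_ind_div_le_condProb P hE1 hH1 hU
      (subset_union_left.trans subset_union_left) hc3 (c3base_nonneg P _ _ _ _ _ _)
      fun ω => (hle ω).trans (min_le_left _ _)
  · exact integral_mul_ind_div_le_condProb P hE2 hH2 hU
      (subset_union_right.trans subset_union_left) hc3 (c3base_nonneg P _ _ _ _ _ _)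
      fun ω => (hle ω).trans ((min_le_right _ _).trans (min_le_left _ _))
  · exact integral_mul_ind_div_le_condProb P hE3 hH3 hU subset_union_right hc3
      (c3base_nonneg P _ _ _ _ _ _)
      fun ω => (hle ω).trans ((min_le_right _ _).trans (min_le_right _ _))

/-- Prevision bound for the triple conjunction:
`x123 ≤ min(x1, x2, x3)` where `xi = P(Ei|Hi)`. -/
theorem triple_conj_prevision_le (P : Measure Ω) [IsProbabilityMeasure P]
    (E1 H1 E2 H2 E3 H3 : Set Ω)
    (hE1 : MeasurableSet E1) (hH1 : MeasurableSet H1)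
    (hE2 : MeasurableSet E2) (hH2 : MeasurableSet H2)
    (hE3 : MeasurableSet E3) (hH3 : MeasurableSet H3)
    (h1 : 0 < P H1) (h2 : 0 < P H2) (h3 : 0 < P H3) :
    x123 P E1 H1 E2 H2 E3 H3 ≤
      min (condProb P E1 H1) (min (condProb P E2 H2) (condProb P E3 H3)) :=
  triple_conj_prevision_le_general P E1 H1 E2 H2 E3 H3 hE1 hH1 hE2 hH2 hE3 hH3

end
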